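/- arXiv:1410.4269 — 6 statements merged into one kernel-verified Lean document; each statement's English description precedes it below -/
import Mathlib

section
/- The three elements 1, τ+τ^q, τ·τ^q form an F_q-basis of F_{q^3}. -/
open Polynomial

/-- Fixed points of `x ↦ x ^ card K` in `F` lie in the image of `K`. -/
lemma fixed_mem_range {K F : Type*} [Field K] [Field F] [Algebra K F] [Fintype K] [Fintype F]
    {x : F} (hx : x ^ Fintype.card K = x) : ∃ a : K, algebraMap K F a = x := by
  classical
  set q := Fintype.card K with hqdef
  have h1 : 1 < q := Fintype.one_lt_card
  set P : F[X] := X ^ q - X with hP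
  have hP0 : P ≠ 0 := FiniteField.X_pow_card_sub_X_ne_zero F h1
  have hPdeg : P.natDegree = q := FiniteField.X_pow_card_sub_X_natDegree_eq F h1
  set S : Finset F := Finset.univ.image (algebraMap K F) with hS
  have hScard : S.card = q := by
    rw [hS, Finset.card_image_of_injective _ (algebraMap K F).injective, Finset.card_univ]
  have hsub : S ⊆ P.roots.toFinset := by
    intro y hy
    rw [hS, Finset.mem_image] at hy
    obtain ⟨a, -, rfl⟩ := hy
    rw [Multiset.mem_toFinset, mem_roots hP0]
    simp only [P, IsRoot.def, eval_sub, eval_pow, eval_X, sub_eq_zero]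
    rw [← map_pow, FiniteField.pow_card]
  have hle : P.roots.toFinset.card ≤ q := by
    calc P.roots.toFinset.card ≤ Multiset.card P.roots := Multiset.toFinset_card_le _
      _ ≤ P.natDegree := P.card_roots' 
      _ = q := hPdeg
  have heq : S = P.roots.toFinset :=
    Finset.eq_of_subset_of_card_le hsub (by rw [hScard]; exact hle)
  have hxmem : x ∈ P.roots.toFinset := by
    rw [Multiset.mem_toFinset, mem_roots hP0]
    simp only [P, IsRoot.def, eval_sub, eval_pow, eval_X, sub_eq_zero, hx]
  rw [← heq, hS, Finset.mem_image] at hxmem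
  obtain ⟨a, -, ha⟩ := hxmem
  exact ⟨a, ha⟩

theorem stmt_2 (q : ℕ) (hq : IsPrimePow q) (K F : Type*) [Field K] [Field F]
    [Algebra K F] [Fintype K] [Fintype F]
    (hK : Fintype.card K = q) (hF : Fintype.card F = q ^ 3)
    (τ : F) (hτ : (minpoly K τ).natDegree = 3) :
    LinearIndependent K ![(1 : F), τ + τ ^ q, τ * τ ^ q] ∧
      Submodule.span K {(1 : F), τ + τ ^ q, τ * τ ^ q} = ⊤ := by
  classical
  obtain ⟨p, n, hp, hn, hpq⟩ := hq
  have hpp : p.Prime := hp.nat_prime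
  have hq2 : 2 ≤ q := by
    subst hpq
    exact hpp.two_le.trans (Nat.le_self_pow hn.ne' p)
  -- characteristic of F is p
  obtain ⟨r, hr⟩ := CharP.exists F
  haveI := hr
  have hrp : r.Prime := CharP.char_is_prime F r
  haveI : Fact r.Prime := ⟨hrp⟩
  obtain ⟨m, hm⟩ := FiniteField.card F r
  have hrp' : r = p := by
    have hdvd : r ∣ p ^ (n * 3) := by
      rw [pow_mul, hpq, ← hF, hm.2]
      exact dvd_pow_self r m.ne_zero
    exact (Nat.prime_dvd_prime_iff_eq hrp hpp).mp (hrp.dvd_of_dvd_pow hdvd)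
  subst hrp'
  haveI : ExpChar F r := ExpChar.prime ‹Fact r.Prime›.out
  -- the q-power Frobenius
  set φ : F →+* F := iterateFrobenius F r n with hφ
  have hφ_def : ∀ x : F, φ x = x ^ q := by
    intro x; rw [hφ, iterateFrobenius_def, hpq]
  have hφK : ∀ a : K, φ (algebraMap K F a) = algebraMap K F a := by
    intro a
    rw [hφ_def, ← map_pow, ← hK, FiniteField.pow_card]
  have hφ3 : ∀ x : F, φ (φ (φ x)) = x := by
    intro x
    simp only [hφ_def, ← pow_mul]
    rw [show q * q * q = q ^ 3 by ring, ← hF, FiniteField.pow_card]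
  -- fixed points
  have hfix : ∀ x : F, φ x = x → ∃ a : K, algebraMap K F a = x := by
    intro x hx
    exact fixed_mem_range (by rwa [hK, ← hφ_def])
  have hτK : ¬ ∃ a : K, algebraMap K F a = τ := by
    rintro ⟨a, rfl⟩
    rw [minpoly.eq_X_sub_C] at hτ
    simp at hτ
  have hinj : Function.Injective φ := φ.injective
  set u := τ with hu
  set v := φ τ with hv
  set w := φ v with hw
  have hwu : φ w = u := hφ3 τ
  have huv : u ≠ v := by
    intro h
    exact hτK (hfix τ h.symm)
  have hvw : v ≠ w := fun h => huv (hinj h)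
  have huw : u ≠ w := by
    intro h
    have h2 : v = u := by rw [← hwu]; exact congrArg φ h
    exact huv h2.symm
  have hτq : τ ^ q = v := (hφ_def τ).symm
  -- linear independence
  have hli : LinearIndependent K ![(1 : F), τ + τ ^ q, τ * τ ^ q] := by
    rw [Fintype.linearIndependent_iff]
    intro g hg
    have E1 : algebraMap K F (g 0) + algebraMap K F (g 1) * (u + v)
        + algebraMap K F (g 2) * (u * v) = 0 := by
      have := hg
      simp only [Fin.sum_univ_three, Matrix.cons_val_zero, Matrix.cons_val_one,
        Matrix.head_cons, Matrix.cons_val_two, Matrix.tail_cons, Algebra.smul_def,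
        mul_one, hτq] at this
      linear_combination this
    have E2 : algebraMap K F (g 0) + algebraMap K F (g 1) * (v + w)
        + algebraMap K F (g 2) * (v * w) = 0 := by
      have := congrArg φ E1
      simpa only [map_add, map_mul, map_zero, hφK, ← hv, ← hw] using this
    have E3 : algebraMap K F (g 0) + algebraMap K F (g 1) * (w + u)
        + algebraMap K F (g 2) * (w * u) = 0 := by
      have := congrArg φ E2
      simpa only [map_add, map_mul, map_zero, hφK, ← hw, hwu] using this
    have h13 : (v - w) * (algebraMap K F (g 1) + algebraMap K F (g 2) * u) = 0 := by
      linear_combination E1 - E3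
    have h12 : (u - w) * (algebraMap K F (g 1) + algebraMap K F (g 2) * v) = 0 := by
      linear_combination E1 - E2
    have hb1 : algebraMap K F (g 1) + algebraMap K F (g 2) * u = 0 :=
      (mul_eq_zero.mp h13).resolve_left (sub_ne_zero.mpr hvw)
    have hb2 : algebraMap K F (g 1) + algebraMap K F (g 2) * v = 0 :=
      (mul_eq_zero.mp h12).resolve_left (sub_ne_zero.mpr huw)
    have hc : algebraMap K F (g 2) * (u - v) = 0 := by linear_combination hb1 - hb2
    have hc0 : algebraMap K F (g 2) = 0 :=
      (mul_eq_zero.mp hc).resolve_right (sub_ne_zero.mpr huv)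
    have hg2 : g 2 = 0 := by
      exact (map_eq_zero_iff _ (algebraMap K F).injective).mp hc0
    have hg1 : g 1 = 0 := by
      apply (map_eq_zero_iff (algebraMap K F) (algebraMap K F).injective).mp
      linear_combination hb1 - hc0 * u
    have hg0 : g 0 = 0 := by
      apply (map_eq_zero_iff (algebraMap K F) (algebraMap K F).injective).mp
      rw [hg1, hg2, map_zero] at E1
      linear_combination E1
    intro i
    fin_cases i <;> assumption
  refine ⟨hli, ?_⟩
  -- span
  have hfr : Module.finrank K F = 3 := by
    have := Module.card_eq_pow_finrank (K := K) (V := F)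
    rw [hK, hF] at this
    exact (Nat.pow_right_injective hq2 this.symm)
  have hspan := hli.span_eq_top_of_card_eq_finrank (by simp [hfr])
  have hrange : Set.range ![(1 : F), τ + τ ^ q, τ * τ ^ q]
      = {(1 : F), τ + τ ^ q, τ * τ ^ q} := by
    simp only [Matrix.range_cons, Matrix.range_empty, Set.union_empty,
      Set.union_insert, Set.union_singleton]
    ext x
    simp only [Set.mem_insert_iff, Set.mem_singleton_iff]
    tauto
  rw [← hrange]
  exact hspan
end

section
/- For any two distinct points P, Q of PG(2,q) (i.e., points with coordinates in F_q), there is a unique conic of PG(2,q^3) passing through the five points P, Q, E, E^q, E^{q^2}, where E = (1,τ,τ^2); moreover this conic can be given by an equation with all coefficients in F_q. -/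
/-- Evaluation of the quadratic form with coefficient vector `c` at the point `v`. -/
def conicEval {R : Type*} [CommRing R] (c : Fin 6 → R) (v : Fin 3 → R) : R :=
  c 0 * v 0 ^ 2 + c 1 * v 1 ^ 2 + c 2 * v 2 ^ 2 +
    c 3 * (v 0 * v 1) + c 4 * (v 0 * v 2) + c 5 * (v 1 * v 2)

namespace Stmt11

variable {R : Type*} [CommRing R]

def det3 (u v w : Fin 3 → R) : R :=
  u 0 * (v 1 * w 2 - v 2 * w 1) - u 1 * (v 0 * w 2 - v 2 * w 0) + u 2 * (v 0 * w 1 - v 1 * w 0)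

def cross3 (a b : Fin 3 → R) : Fin 3 → R :=
  ![a 1 * b 2 - a 2 * b 1, a 2 * b 0 - a 0 * b 2, a 0 * b 1 - a 1 * b 0]

def dot3 (a v : Fin 3 → R) : R := a 0 * v 0 + a 1 * v 1 + a 2 * v 2

def quadOf (l m : Fin 3 → R) : Fin 6 → R
  | 0 => l 0 * m 0
  | 1 => l 1 * m 1
  | 2 => l 2 * m 2
  | 3 => l 0 * m 1 + l 1 * m 0
  | 4 => l 0 * m 2 + l 2 * m 0
  | 5 => l 1 * m 2 + l 2 * m 1

def mon3 (v : Fin 3 → R) : Fin 6 → R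
  | 0 => v 0 ^ 2
  | 1 => v 1 ^ 2
  | 2 => v 2 ^ 2
  | 3 => v 0 * v 1
  | 4 => v 0 * v 2
  | 5 => v 1 * v 2

lemma conicEval_quadOf (l m v : Fin 3 → R) :
    conicEval (quadOf l m) v = dot3 l v * dot3 m v := by
  simp [conicEval, quadOf, dot3, Matrix.cons_val_succ]; ring

lemma dot3_cross3_left (a b : Fin 3 → R) : dot3 (cross3 a b) a = 0 := by
  simp [dot3, cross3]; ring

lemma dot3_cross3_right (a b : Fin 3 → R) : dot3 (cross3 a b) b = 0 := by
  simp [dot3, cross3]; ring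

lemma dot3_cross3 (a b v : Fin 3 → R) : dot3 (cross3 a b) v = det3 v a b := by
  simp [dot3, cross3, det3]; ring

lemma det3_cyc (u v w : Fin 3 → R) : det3 u v w = det3 v w u := by
  simp [det3]; ring

lemma det3_swap (u v w : Fin 3 → R) : det3 u v w = - det3 v u w := by
  simp [det3]; ring

lemma cramer3 (u v w x : Fin 3 → R) (j : Fin 3) :
    det3 u v w * x j =
      det3 x v w * u j + det3 u x w * v j + det3 u v x * w j := by
  fin_cases j <;> (simp [det3]; ring)

lemma map_det3 {S : Type*} [CommRing S] (f : R →+* S) (u v w : Fin 3 → R) :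
    f (det3 u v w) = det3 (f ∘ u) (f ∘ v) (f ∘ w) := by
  simp [det3, map_add, map_sub, map_mul]

lemma map_conicEval {S : Type*} [CommRing S] (f : R →+* S) (c : Fin 6 → R) (v : Fin 3 → R) :
    f (conicEval c v) = conicEval (f ∘ c) (f ∘ v) := by
  simp [conicEval, map_add, map_mul, map_pow]

lemma conicEval_eq_sum (c : Fin 6 → R) (v : Fin 3 → R) :
    conicEval c v = ∑ i, c i * mon3 v i := by
  simp [conicEval, mon3, Fin.sum_univ_six]

lemma exists_smul_of_cross3 {K : Type*} [Field K] (P Q : Fin 3 → K)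
    (hP : P ≠ 0)
    (e0 : P 1 * Q 2 - P 2 * Q 1 = 0)
    (e1 : P 2 * Q 0 - P 0 * Q 2 = 0)
    (e2 : P 0 * Q 1 - P 1 * Q 0 = 0) :
    ∃ lam : K, Q = lam • P := by
  have hpq : ∀ i j : Fin 3, Q j * P i = Q i * P j := by
    intro i j
    fin_cases i <;> fin_cases j <;>
      simp only [show ((⟨0, by omega⟩ : Fin 3)) = 0 from rfl,
        show ((⟨1, by omega⟩ : Fin 3)) = 1 from rfl,
        show ((⟨2, by omega⟩ : Fin 3)) = 2 from rfl]
    all_goals first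
      | ring1
      | linear_combination e0
      | linear_combination (-1 : K) * e0
      | linear_combination e1
      | linear_combination (-1 : K) * e1
      | linear_combination e2
      | linear_combination (-1 : K) * e2
  obtain ⟨i, hi⟩ : ∃ i, P i ≠ 0 := by
    by_contra h
    push_neg at h
    exact hP (funext fun i => h i)
  refine ⟨Q i * (P i)⁻¹, funext fun j => ?_⟩
  have h := hpq i j
  have : Q i * (P i)⁻¹ * P j = Q j := by
    rw [mul_comm (Q i) (P i)⁻¹, mul_assoc, ← h, mul_comm (Q j) (P i), ← mul_assoc,
      inv_mul_cancel₀ hi, one_mul]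
  simpa [Pi.smul_apply, smul_eq_mul] using this.symm

/-- the evaluation functional, as a linear map in the coefficients, with values in an
algebra -/
noncomputable def evalLM (K F : Type*) [Field K] [Field F] [Algebra K F]
    (v : Fin 3 → F) : (Fin 6 → K) →ₗ[K] F :=
  ∑ i, (LinearMap.proj i : (Fin 6 → K) →ₗ[K] K).smulRight (mon3 v i)

lemma evalLM_apply (K F : Type*) [Field K] [Field F] [Algebra K F]
    (v : Fin 3 → F) (c : Fin 6 → K) :
    evalLM K F v c = conicEval (algebraMap K F ∘ c) v := by
  simp [evalLM, LinearMap.sum_apply, LinearMap.smulRight_apply, LinearMap.proj_apply,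
    conicEval_eq_sum, Algebra.smul_def, Function.comp]

/-- evaluation as an F-linear functional -/
noncomputable def evalLF (F : Type*) [Field F] (v : Fin 3 → F) : (Fin 6 → F) →ₗ[F] F :=
  ∑ i, (LinearMap.proj i : (Fin 6 → F) →ₗ[F] F).smulRight (mon3 v i)

lemma evalLF_apply (F : Type*) [Field F] (v : Fin 3 → F) (c : Fin 6 → F) :
    evalLF F v c = conicEval c v := by
  simp [evalLF, LinearMap.sum_apply, LinearMap.smulRight_apply, LinearMap.proj_apply,
    conicEval_eq_sum, smul_eq_mul]

lemma conic_exists (K F : Type*) [Field K] [Field F] [Algebra K F] [FiniteDimensional K F]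
    (hdim : Module.finrank K F = 3) (v : Fin 3 → F) (P Q : Fin 3 → K) :
    ∃ c : Fin 6 → K, c ≠ 0 ∧ conicEval c P = 0 ∧ conicEval c Q = 0 ∧
      conicEval (algebraMap K F ∘ c) v = 0 := by
  classical
  set Ψ : (Fin 6 → K) →ₗ[K] F × (K × K) :=
    (evalLM K F v).prod ((evalLF K P).prod (evalLF K Q)) with hΨ
  have hlt : Module.finrank K (F × K × K) < Module.finrank K (Fin 6 → K) := by
    rw [Module.finrank_prod, Module.finrank_prod, Module.finrank_self, hdim,
      Module.finrank_fin_fun]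
    norm_num
  have hker := LinearMap.ker_ne_bot_of_finrank_lt hlt (f := Ψ)
  obtain ⟨c, hc, hc0⟩ := Submodule.ne_bot_iff _ |>.mp hker
  have h1 : Ψ c = 0 := hc
  rw [hΨ] at h1
  have h2 := congrArg Prod.fst h1
  have h3 := congrArg (fun x => x.2.1) h1
  have h4 := congrArg (fun x => x.2.2) h1
  simp only [LinearMap.prod_apply, Pi.prod, Prod.fst_zero, Prod.snd_zero] at h2 h3 h4
  refine ⟨c, hc0, ?_, ?_, ?_⟩
  · rw [← evalLF_apply]; exact h3
  · rw [← evalLF_apply]; exact h4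
  · rw [← evalLM_apply]; exact h2

lemma conic_unique {F : Type*} [Field F] (pt : Fin 5 → (Fin 3 → F)) (d : Fin 5 → (Fin 6 → F))
    (hd : ∀ i j : Fin 5, i ≠ j → conicEval (d j) (pt i) = 0)
    (hdd : ∀ j, conicEval (d j) (pt j) ≠ 0)
    (c : Fin 6 → F) (hc : c ≠ 0) (hcz : ∀ j, conicEval c (pt j) = 0)
    (c' : Fin 6 → F) (hc' : c' ≠ 0) (hcz' : ∀ j, conicEval c' (pt j) = 0) :
    ∃ μ : F, μ ≠ 0 ∧ c' = μ • c := by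
  classical
  set Φ : (Fin 6 → F) →ₗ[F] (Fin 5 → F) := LinearMap.pi (fun j => evalLF F (pt j)) with hΦdef
  have hΦ : ∀ x j, Φ x j = conicEval x (pt j) := by
    intro x j; rw [hΦdef, LinearMap.pi_apply, evalLF_apply]
  have hsurj : Function.Surjective Φ := by
    intro x
    refine ⟨∑ j, (x j * (conicEval (d j) (pt j))⁻¹) • d j, ?_⟩
    funext i
    rw [map_sum]
    simp only [Finset.sum_apply, map_smul, Pi.smul_apply, smul_eq_mul]
    have : ∀ j, Φ (d j) i = if i = j then conicEval (d i) (pt i) else 0 := by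
      intro j
      rw [hΦ]
      by_cases h : i = j
      · subst h; simp
      · simp [h, hd i j h]
    simp only [this, mul_ite, mul_zero]
    rw [Finset.sum_ite_eq]
    simp [mul_assoc, inv_mul_cancel₀ (hdd i)]
  have hrange : LinearMap.range Φ = ⊤ := LinearMap.range_eq_top.mpr hsurj
  have hkerrank : Module.finrank F (LinearMap.ker Φ) = 1 := by
    have := LinearMap.finrank_range_add_finrank_ker Φ
    rw [hrange, finrank_top, Module.finrank_fin_fun, Module.finrank_fin_fun] at this
    omega
  have hcker : c ∈ LinearMap.ker Φ := by
    rw [LinearMap.mem_ker]; funext j; rw [hΦ]; simpa using hcz j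
  have hspan : (F ∙ c) = LinearMap.ker Φ := by
    apply Submodule.eq_of_le_of_finrank_le
    · rwa [Submodule.span_singleton_le_iff_mem]
    · rw [hkerrank, finrank_span_singleton hc]
  have hc'ker : c' ∈ LinearMap.ker Φ := by
    rw [LinearMap.mem_ker]; funext j; rw [hΦ]; simpa using hcz' j
  rw [← hspan, Submodule.mem_span_singleton] at hc'ker
  obtain ⟨μ, hμ⟩ := hc'ker
  refine ⟨μ, ?_, hμ.symm⟩
  rintro rfl
  rw [zero_smul] at hμ
  exact hc' hμ.symm

lemma frob_hom (F : Type*) [Field F] [Fintype F] (q : ℕ) (hq : IsPrimePow q)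
    (hF : Fintype.card F = q ^ 3) : ∃ σ : F →+* F, ∀ x, σ x = x ^ q := by
  obtain ⟨p, k, hp, hk, hpk⟩ := hq
  haveI hpf : Fact p.Prime := ⟨Nat.prime_iff.mpr hp⟩
  obtain ⟨p', hp'⟩ := CharP.exists F
  haveI := hp'
  obtain ⟨n, hp'p, hcard⟩ := FiniteField.card F p'
  have hpp : p' = p := by
    have h1 : p' ∣ p ^ (3 * k) := by
      have : p' ^ (n : ℕ) = p ^ (3 * k) := by
        rw [← hcard, hF, ← hpk, ← pow_mul, mul_comm]
      calc p' ∣ p' ^ (n : ℕ) := dvd_pow_self p' n.pos.ne'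
        _ = p ^ (3 * k) := this
    exact (Nat.prime_dvd_prime_iff_eq hp'p hpf.1).mp (hp'p.dvd_of_dvd_pow h1)
  subst hpp
  have hq0 : q ≠ 0 := by
    rw [← hpk]; exact pow_ne_zero _ hpf.1.pos.ne'
  refine ⟨⟨⟨⟨(· ^ q), one_pow q⟩, fun x y => mul_pow x y q⟩, zero_pow hq0, ?_⟩, fun x => rfl⟩
  intro x y
  simp only [OneHom.coe_mk, MonoidHom.coe_mk]
  rw [← hpk]
  exact add_pow_char_pow ..

open Polynomial in
lemma fixed_in_range {K F : Type*} [Field K] [Field F] [Algebra K F] [Fintype K] [Fintype F]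
    (q : ℕ) (hq2 : 2 ≤ q) (hK : Fintype.card K = q) (τ : F)
    (hτ : τ ∉ Set.range (algebraMap K F)) (h : τ ^ q = τ) : False := by
  classical
  set g : F[X] := X ^ q - X with hg
  have hdeg : g.natDegree = q := FiniteField.X_pow_card_sub_X_natDegree_eq F hq2
  have hg0 : g ≠ 0 := by
    intro h0
    rw [h0, natDegree_zero] at hdeg
    omega
  set s : Finset F := Finset.univ.image (algebraMap K F) ∪ {τ} with hs
  have hroot : ∀ x ∈ s, g.IsRoot x := by
    intro x hx
    rcases Finset.mem_union.mp hx with hx | hx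
    · obtain ⟨a, -, rfl⟩ := Finset.mem_image.mp hx
      have : algebraMap K F a ^ q = algebraMap K F a := by
        rw [← map_pow, ← hK, FiniteField.pow_card]
      simp [g, IsRoot, this]
    · rw [Finset.mem_singleton.mp hx]
      simp [g, IsRoot, h]
  have hsub : s ⊆ g.roots.toFinset := by
    intro x hx
    rw [Multiset.mem_toFinset, mem_roots hg0]
    exact hroot x hx
  have hcard : s.card = q + 1 := by
    rw [hs, Finset.card_union_of_disjoint, Finset.card_singleton,
      Finset.card_image_of_injective _ (algebraMap K F).injective, Finset.card_univ, hK]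
    simp only [Finset.disjoint_singleton_right, Finset.mem_image]
    rintro ⟨a, -, ha⟩
    exact hτ ⟨a, ha⟩
  have h1 : s.card ≤ g.roots.toFinset.card := Finset.card_le_card hsub
  have h2 : g.roots.toFinset.card ≤ Multiset.card g.roots := g.roots.toFinset_card_le
  have h3 : Multiset.card g.roots ≤ g.natDegree := g.card_roots'
  omega

open Polynomial in
lemma indep {K F : Type*} [Field K] [Field F] [Algebra K F] (τ : F)
    (hτ : (minpoly K τ).natDegree = 3) (a b c : K)
    (h : algebraMap K F a + algebraMap K F b * τ + algebraMap K F c * τ ^ 2 = 0) :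
    a = 0 ∧ b = 0 ∧ c = 0 := by
  set f : K[X] := C a + C b * X + C c * X ^ 2 with hfdef
  have hf : f = 0 := by
    by_contra hf0
    have hev : Polynomial.aeval τ f = 0 := by
      simp only [hfdef, map_add, map_mul, map_pow, aeval_C, aeval_X]
      exact h
    have hle := minpoly.degree_le_of_ne_zero K τ hf0 hev
    have hdegf : f.natDegree ≤ 2 := by
      rw [hfdef]
      compute_degree
    have := Polynomial.natDegree_le_natDegree hle
    omega
  refine ⟨?_, ?_, ?_⟩
  · have := congrArg (fun p => Polynomial.coeff p 0) hf
    simpa [hfdef, coeff_add, coeff_C, coeff_C_mul, coeff_X, coeff_X_pow] using this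
  · have := congrArg (fun p => Polynomial.coeff p 1) hf
    simpa [hfdef, coeff_add, coeff_C, coeff_C_mul, coeff_X, coeff_X_pow] using this
  · have := congrArg (fun p => Polynomial.coeff p 2) hf
    simpa [hfdef, coeff_add, coeff_C, coeff_C_mul, coeff_X, coeff_X_pow] using this

end Stmt11

open Stmt11 in
theorem stmt_11 (q : ℕ) (hq : IsPrimePow q) (K F : Type*) [Field K] [Field F]
    [Algebra K F] [Fintype K] [Fintype F]
    (hK : Fintype.card K = q) (hF : Fintype.card F = q ^ 3)
    (τ : F) (hτ : (minpoly K τ).natDegree = 3) :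
    ∀ P Q : Fin 3 → K, P ≠ 0 → Q ≠ 0 → (¬ ∃ lam : K, Q = lam • P) →
      ∃ c : Fin 6 → K, c ≠ 0 ∧
        conicEval c P = 0 ∧ conicEval c Q = 0 ∧
        conicEval (algebraMap K F ∘ c) ![1, τ, τ ^ 2] = 0 ∧
        conicEval (algebraMap K F ∘ c) ![1, τ ^ q, (τ ^ q) ^ 2] = 0 ∧
        conicEval (algebraMap K F ∘ c) ![1, τ ^ q ^ 2, (τ ^ q ^ 2) ^ 2] = 0 ∧
        ∀ c' : Fin 6 → F, c' ≠ 0 →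
          conicEval c' (algebraMap K F ∘ P) = 0 →
          conicEval c' (algebraMap K F ∘ Q) = 0 →
          conicEval c' ![1, τ, τ ^ 2] = 0 →
          conicEval c' ![1, τ ^ q, (τ ^ q) ^ 2] = 0 →
          conicEval c' ![1, τ ^ q ^ 2, (τ ^ q ^ 2) ^ 2] = 0 →
          ∃ μ : F, μ ≠ 0 ∧ c' = μ • (algebraMap K F ∘ c) := by
  intro P Q hP hQ hlam
  classical
  have hq2 : 2 ≤ q := hq.two_le
  obtain ⟨σ, hσ⟩ := frob_hom F q hq hF
  have hAinj : Function.Injective (algebraMap K F) := (algebraMap K F).injective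
  have hσA : ∀ x : K, σ (algebraMap K F x) = algebraMap K F x := by
    intro x; rw [hσ, ← map_pow, ← hK, FiniteField.pow_card]
  have hσ3 : ∀ x : F, σ (σ (σ x)) = x := by
    intro x
    rw [hσ, hσ, hσ, ← pow_mul, ← pow_mul]
    rw [show q * (q * q) = q ^ 3 by ring, ← hF]
    exact FiniteField.pow_card x
  have hσinj : Function.Injective σ := σ.injective
  have hτnr : τ ∉ Set.range (algebraMap K F) := by
    rintro ⟨a, rfl⟩
    rw [minpoly.eq_X_sub_C] at hτ
    simp at hτ
  -- distinctness of the three conjugates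
  have h1 : τ ^ q ≠ τ := fun h => fixed_in_range q hq2 hK τ hτnr h
  have eσ1 : σ τ = τ ^ q := hσ τ
  have eσ2 : σ (τ ^ q) = τ ^ q ^ 2 := by rw [hσ, ← pow_mul, pow_two]
  have eσ3 : σ (τ ^ q ^ 2) = τ := by rw [← eσ2, ← eσ1, hσ3]
  have h2 : τ ^ q ^ 2 ≠ τ := by
    intro h
    have := congrArg σ h
    rw [eσ3, eσ1] at this
    exact h1 this.symm
  have h3 : τ ^ q ^ 2 ≠ τ ^ q := by
    intro h
    exact h1 (hσinj (eσ2.trans (h.trans eσ1.symm)))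
  -- the points
  set E0 : Fin 3 → F := ![1, τ, τ ^ 2] with hE0d
  set E1 : Fin 3 → F := ![1, τ ^ q, (τ ^ q) ^ 2] with hE1d
  set E2 : Fin 3 → F := ![1, τ ^ q ^ 2, (τ ^ q ^ 2) ^ 2] with hE2d
  set P' : Fin 3 → F := (algebraMap K F) ∘ P with hP'd
  set Q' : Fin 3 → F := (algebraMap K F) ∘ Q with hQ'd
  have hσP' : σ ∘ P' = P' := funext fun j => hσA (P j)
  have hσQ' : σ ∘ Q' = Q' := funext fun j => hσA (Q j)
  have hσE0 : σ ∘ E0 = E1 := by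
    funext j; fin_cases j
    · exact map_one σ
    · exact eσ1
    · show σ (τ ^ 2) = (τ ^ q) ^ 2
      rw [map_pow, eσ1]
  have hσE1 : σ ∘ E1 = E2 := by
    funext j; fin_cases j
    · exact map_one σ
    · exact eσ2
    · show σ ((τ ^ q) ^ 2) = (τ ^ q ^ 2) ^ 2
      rw [map_pow, eσ2]
  have hσE2 : σ ∘ E2 = E0 := by
    funext j; fin_cases j
    · exact map_one σ
    · exact eσ3
    · show σ ((τ ^ q ^ 2) ^ 2) = τ ^ 2
      rw [map_pow, eσ3]
  have hP'0 : P' ≠ 0 := by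
    intro h
    apply hP
    funext j
    exact hAinj (by rw [show (algebraMap K F) (P j) = P' j from rfl, h]; simp)
  have hQ'0 : Q' ≠ 0 := by
    intro h
    apply hQ
    funext j
    exact hAinj (by rw [show (algebraMap K F) (Q j) = Q' j from rfl, h]; simp)
  -- P, Q, E₀ not collinear
  have hdPQE : det3 P' Q' E0 ≠ 0 := by
    intro h
    have hexp : det3 P' Q' E0 =
        algebraMap K F (cross3 P Q 0) + algebraMap K F (cross3 P Q 1) * τ +
          algebraMap K F (cross3 P Q 2) * τ ^ 2 := by
      simp only [det3, cross3, hP'd, hQ'd, hE0d, Function.comp_apply, map_sub, map_mul,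
        Matrix.cons_val_zero, Matrix.cons_val_one, Matrix.head_cons, Matrix.cons_val_two,
        Matrix.tail_cons]
      ring
    rw [hexp] at h
    obtain ⟨ha, hb, hc⟩ := indep τ hτ _ _ _ h
    exact hlam (exists_smul_of_cross3 P Q hP ha hb hc)
  -- the triangle of conjugate points is nondegenerate
  have hdE : det3 E0 E1 E2 ≠ 0 := by
    have hvdm : det3 E0 E1 E2 = (τ ^ q - τ) * (τ ^ q ^ 2 - τ) * (τ ^ q ^ 2 - τ ^ q) := by
      simp only [det3, hE0d, hE1d, hE2d, Matrix.cons_val_zero, Matrix.cons_val_one,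
        Matrix.head_cons, Matrix.cons_val_two, Matrix.tail_cons]
      ring
    rw [hvdm]
    exact mul_ne_zero (mul_ne_zero (sub_ne_zero.mpr h1) (sub_ne_zero.mpr h2)) (sub_ne_zero.mpr h3)
  -- conjugates of the P,Q,E determinant
  have hdPQE1 : det3 P' Q' E1 ≠ 0 := by
    rw [← hσE0, ← hσP', ← hσQ', ← map_det3]
    intro h0
    exact hdPQE (hσinj (h0.trans (map_zero σ).symm))
  have hdPQE2 : det3 P' Q' E2 ≠ 0 := by
    rw [← hσE1, ← hσP', ← hσQ', ← map_det3]
    intro h0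
    exact hdPQE1 (hσinj (h0.trans (map_zero σ).symm))
  -- a Frobenius-fixed nonzero point is not on the line through E1, E2
  have hdXE : ∀ X : Fin 3 → F, σ ∘ X = X → X ≠ 0 → det3 X E1 E2 ≠ 0 := by
    intro X hfix hX0 h
    have ha : det3 X E2 E0 = 0 := by
      have := congrArg σ h
      rwa [map_det3, hfix, hσE1, hσE2, map_zero] at this
    have hb : det3 X E0 E1 = 0 := by
      apply hσinj
      rw [map_det3, hfix, hσE0, hσE1, map_zero]
      exact h
    apply hX0
    funext j
    have hcr := cramer3 E0 E1 E2 X j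
    have c1 : det3 E0 X E2 = 0 := by rw [det3_cyc]; exact ha
    have c2 : det3 E0 E1 X = 0 := by rw [← det3_cyc]; exact hb
    rw [h, c1, c2, zero_mul, zero_mul, zero_mul, add_zero, add_zero] at hcr
    rcases mul_eq_zero.mp hcr with h' | h'
    · exact absurd h' hdE
    · exact h'
  have hdPE : det3 P' E1 E2 ≠ 0 := hdXE P' hσP' hP'0
  have hdQE : det3 Q' E1 E2 ≠ 0 := hdXE Q' hσQ' hQ'0
  -- existence of the conic over K
  haveI : Module.Finite K F := Module.finite_iff_finite.mpr inferInstance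
  have hdim : Module.finrank K F = 3 := by
    have hcard := Module.card_eq_pow_finrank (K := K) (V := F)
    rw [hK, hF] at hcard
    exact (Nat.pow_right_injective hq2 hcard.symm)
  obtain ⟨c, hc0, hcP, hcQ, hcE⟩ := conic_exists K F hdim E0 P Q
  have hcE1 : conicEval (algebraMap K F ∘ c) E1 = 0 := by
    have := congrArg σ hcE
    rw [map_conicEval, map_zero] at this
    rwa [show σ ∘ ((algebraMap K F) ∘ c) = (algebraMap K F) ∘ c from
      funext fun i => hσA (c i), hσE0] at this
  have hcE2 : conicEval (algebraMap K F ∘ c) E2 = 0 := by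
    have := congrArg σ hcE1
    rw [map_conicEval, map_zero] at this
    rwa [show σ ∘ ((algebraMap K F) ∘ c) = (algebraMap K F) ∘ c from
      funext fun i => hσA (c i), hσE1] at this
  refine ⟨c, hc0, hcP, hcQ, hcE, hcE1, hcE2, ?_⟩
  -- uniqueness
  intro c' hc'0 hc'P hc'Q hc'E hc'E1 hc'E2
  set pt : Fin 5 → (Fin 3 → F) := ![P', Q', E0, E1, E2] with hptd
  set d : Fin 5 → (Fin 6 → F) :=
    ![quadOf (cross3 Q' E0) (cross3 E1 E2),
      quadOf (cross3 P' E0) (cross3 E1 E2),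
      quadOf (cross3 P' Q') (cross3 E1 E2),
      quadOf (cross3 P' Q') (cross3 E2 E0),
      quadOf (cross3 P' Q') (cross3 E0 E1)] with hdd'
  have hoff : ∀ i j : Fin 5, i ≠ j → conicEval (d j) (pt i) = 0 := by
    intro i j hij
    fin_cases i <;> fin_cases j <;>
      first
        | exact absurd rfl hij
        | (rw [show (conicEval (d _) (pt _) : F) =
              conicEval (d _) (pt _) from rfl]  -- no-op
           simp [hptd, hdd', conicEval_quadOf, dot3_cross3_left, dot3_cross3_right])
  have hdiag : ∀ j, conicEval (d j) (pt j) ≠ 0 := by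
    intro j
    fin_cases j
    · show conicEval (quadOf (cross3 Q' E0) (cross3 E1 E2)) P' ≠ 0
      rw [conicEval_quadOf, dot3_cross3, dot3_cross3]
      exact mul_ne_zero hdPQE hdPE
    · show conicEval (quadOf (cross3 P' E0) (cross3 E1 E2)) Q' ≠ 0
      rw [conicEval_quadOf, dot3_cross3, dot3_cross3]
      refine mul_ne_zero ?_ hdQE
      rw [det3_swap]
      exact neg_ne_zero.mpr hdPQE
    · show conicEval (quadOf (cross3 P' Q') (cross3 E1 E2)) E0 ≠ 0
      rw [conicEval_quadOf, dot3_cross3, dot3_cross3]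
      refine mul_ne_zero ?_ hdE
      rw [det3_cyc]
      exact hdPQE
    · show conicEval (quadOf (cross3 P' Q') (cross3 E2 E0)) E1 ≠ 0
      rw [conicEval_quadOf, dot3_cross3, dot3_cross3]
      refine mul_ne_zero ?_ ?_
      · rw [det3_cyc]; exact hdPQE1
      · rw [det3_cyc, det3_cyc]; exact hdE
    · show conicEval (quadOf (cross3 P' Q') (cross3 E0 E1)) E2 ≠ 0
      rw [conicEval_quadOf, dot3_cross3, dot3_cross3]
      refine mul_ne_zero ?_ ?_
      · rw [det3_cyc]; exact hdPQE2
      · rw [det3_cyc]; exact hdE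
  have hAc0 : (algebraMap K F) ∘ c ≠ 0 := by
    intro h
    apply hc0
    funext i
    exact hAinj (by rw [show (algebraMap K F) (c i) = ((algebraMap K F) ∘ c) i from rfl, h]; simp)
  have hcz : ∀ j, conicEval ((algebraMap K F) ∘ c) (pt j) = 0 := by
    intro j
    fin_cases j
    · show conicEval ((algebraMap K F) ∘ c) P' = 0
      rw [hP'd, ← map_conicEval, hcP, map_zero]
    · show conicEval ((algebraMap K F) ∘ c) Q' = 0
      rw [hQ'd, ← map_conicEval, hcQ, map_zero]
    · exact hcE
    · exact hcE1
    · exact hcE2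
  have hcz' : ∀ j, conicEval c' (pt j) = 0 := by
    intro j
    fin_cases j
    · exact hc'P
    · exact hc'Q
    · exact hc'E
    · exact hc'E1
    · exact hc'E2
  exact conic_unique pt d hoff hdiag ((algebraMap K F) ∘ c) hAc0 hcz c' hc'0 hcz'
end

section
/- Assume q is even. For k ∈ F_q, the conic C_k with equation (y^2 - xz) + k(-t_0x^2 + yz - t_2xz - t_1xy) = 0 in PG(2,q) has nucleus N_k = (k, 1 - kt_2, -kt_1). The nuclei N_k for k ∈ F_q are pairwise distinct and all lie on the line [t_1, 0, 1] (i.e., they satisfy t_1x + z = 0), which does not pass through (0,0,1). -/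
open MvPolynomial in
theorem stmt_12 (q : ℕ) (hq : IsPrimePow q) (heven : Even q)
    (K : Type*) [Field K] [Fintype K] (hK : Fintype.card K = q)
    (t0 t1 t2 : K)
    (hirr : Irreducible (Polynomial.X ^ 3 - Polynomial.C t2 * Polynomial.X ^ 2 -
      Polynomial.C t1 * Polynomial.X - Polynomial.C t0)) :
    (∀ k : K,
      (![k, 1 - k * t2, -(k * t1)] : Fin 3 → K) ≠ 0 ∧
      (∀ i : Fin 3,
        eval ![k, 1 - k * t2, -(k * t1)]
          (pderiv i ((X 1) ^ 2 - X 0 * X 2 +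
            C k * (-(C t0) * (X 0) ^ 2 + X 1 * X 2 - C t2 * (X 0 * X 2) -
              C t1 * (X 0 * X 1)) : MvPolynomial (Fin 3) K)) = 0) ∧
      t1 * k + 0 * (1 - k * t2) + 1 * (-(k * t1)) = 0) ∧
    (∀ k k' : K, k ≠ k' →
      ¬ ∃ lam : K, lam ≠ 0 ∧
        (![k', 1 - k' * t2, -(k' * t1)] : Fin 3 → K) = lam • ![k, 1 - k * t2, -(k * t1)]) ∧
    (t1 * 0 + 0 * 0 + 1 * 1 : K) ≠ 0 := by
  have h2 : (2 : K) = 0 := by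
    obtain ⟨n, hp, hcard⟩ := FiniteField.card K (ringChar K)
    have h2q : 2 ∣ q := heven.two_dvd
    rw [← hK, hcard] at h2q
    have : (2 : ℕ).Prime := Nat.prime_two
    have h2p : 2 ∣ ringChar K := this.dvd_of_dvd_pow h2q
    have : ringChar K = 2 := ((Nat.prime_dvd_prime_iff_eq this hp).mp h2p).symm
    simpa [this] using CharP.cast_eq_zero K (ringChar K)
  have h4 : (4 : K) = 0 := by linear_combination 2 * h2
  refine ⟨fun k => ⟨?_, ?_, by ring⟩, fun k k' hkk' => ?_, by norm_num⟩
  · intro h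
    by_cases hk : k = 0
    · have h1 := congrFun h 1
      simp [hk] at h1
    · have h0 := congrFun h 0
      simp [hk] at h0
  · intro i
    fin_cases i <;>
      simp [pderiv_X, Pi.single_apply, Fin.ext_iff] <;>
      ring_nf <;> simp [h2, h4]
  · rintro ⟨lam, hlam, heq⟩
    have h0 := congrFun heq 0
    have h1 := congrFun heq 1
    simp [Matrix.smul_cons] at h0 h1
    apply hkk'
    -- from h1: 1 - k' * t2 = lam * (1 - k * t2), h0 : k' = lam * k
    have : lam = 1 := by
      rw [h0] at h1
      linear_combination h1 + (lam - 1) * h2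
    rw [this, one_mul] at h0
    exact h0.symm
end

section
/- Let N(x) = x^{q^2+q+1} be the norm from F_{q^3} to F_q. For k, a ∈ F_{q^3} with N(k) = N(a) = 1, define the F_q-subspaces S_k = {(x, kx) : x ∈ F_{q^3}} and C_a = {(x, a·x^{q^2}) : x ∈ F_{q^3}} of F_{q^3} × F_{q^3}. Then: (i) for all such k, a, the intersection C_a ∩ S_k is an F_q-subspace of dimension exactly 1; (ii) for a ≠ a' with N(a) = N(a') = 1, C_a ∩ C_{a'} = {0}. -/
/-!
Write `u = k / a`, so that `N(u) = 1`. The intersection `C_a ∩ S_k` is the graph of `x ↦ k x` over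
the solutions of `x ^ q² = u x`. Since `gcd(q³ - 1, q² - 1) = q - 1`, the `(q² - 1)`-th powers in
the cyclic group `F_{q³}ˣ` are exactly the elements of norm one (this is Hilbert 90 for the
generator `x ↦ x ^ q²` of the Galois group), so there is a nonzero solution `x₀`. Any other
solution `x` gives a quotient `x / x₀` fixed by `x ↦ x ^ q²`, hence lying in `F_q`: the solutions
form the line `F_q x₀`. Part (ii) is immediate, as `a x ^ q² = a' x ^ q²` forces `x = 0`.
-/

theorem IsCyclic.range_powMonoidHom_eq_ker {G : Type*} [CommGroup G] [IsCyclic G] [Finite G]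
    (m : ℕ) :
    (powMonoidHom m : G →* G).range =
      (powMonoidHom (Nat.card G / (Nat.card G).gcd m)).ker := by
  have hdvd : Nat.card G / (Nat.card G).gcd m ∣ Nat.card G :=
    Nat.div_dvd_of_dvd (Nat.gcd_dvd_left _ _)
  refine Subgroup.eq_of_le_of_card_ge ?_ ?_
  · rintro _ ⟨x, rfl⟩
    rw [MonoidHom.mem_ker, powMonoidHom_apply, powMonoidHom_apply, ← pow_mul,
      ← Nat.mul_div_assoc _ (Nat.gcd_dvd_left _ _), mul_comm,
      Nat.mul_div_assoc _ (Nat.gcd_dvd_right _ _), pow_mul, pow_card_eq_one', one_pow]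
  · rw [IsCyclic.card_powMonoidHom_ker, IsCyclic.card_powMonoidHom_range, Nat.gcd_eq_right hdvd]

theorem FiniteField.mem_range_algebraMap_iff_pow_card_eq_self {K L : Type*} [Field K] [Fintype K]
    [Field L] [Finite L] [Algebra K L] {z : L} :
    z ∈ Set.range (algebraMap K L) ↔ z ^ Fintype.card K = z := by
  constructor
  · rintro ⟨c, rfl⟩
    rw [← map_pow, FiniteField.pow_card]
  · intro hz
    refine (IsGalois.mem_range_algebraMap_iff_fixed z).2 fun φ ↦ ?_
    obtain ⟨n, rfl⟩ := (bijective_frobeniusAlgEquivOfAlgebraic_pow K L).2 φ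
    rw [AlgEquiv.coe_pow]
    exact Function.iterate_fixed hz n

theorem pow_eq_self_of_pow_sq_eq_self {M : Type*} [Monoid M] {z : M} {q : ℕ}
    (h3 : z ^ q ^ 3 = z) (h2 : z ^ q ^ 2 = z) : z ^ q = z :=
  calc z ^ q = (z ^ q ^ 3) ^ q := by rw [h3]
    _ = (z ^ q ^ 2) ^ q ^ 2 := by rw [← pow_mul, ← pow_mul]; ring_nf
    _ = z := by rw [h2, h2]

theorem AlgHom.apply_eq_mul_iff_exists_smul_eq {K F : Type*} [Field K] [Field F] [Algebra K F]
    (τ : F →ₐ[K] F) (hτ : ∀ z, τ z = z → z ∈ Set.range (algebraMap K F)) {u x₀ x : F}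
    (hx₀ : x₀ ≠ 0) (hux₀ : τ x₀ = u * x₀) :
    τ x = u * x ↔ ∃ c : K, c • x₀ = x := by
  constructor
  · intro hx
    have hu : u ≠ 0 := by
      rintro rfl
      exact hx₀ ((map_eq_zero τ).1 (by rw [hux₀, zero_mul]))
    obtain ⟨c, hc⟩ := hτ (x / x₀) (by rw [map_div₀, hx, hux₀, mul_div_mul_left _ _ hu])
    exact ⟨c, by rw [Algebra.smul_def, hc, div_mul_cancel₀ _ hx₀]⟩
  · rintro ⟨c, rfl⟩
    rw [map_smul, hux₀, mul_smul_comm]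

theorem exists_ne_zero_pow_sq_eq_mul {F : Type*} [Field F] [Fintype F] {q : ℕ} (hq : 1 < q)
    (hF : Fintype.card F = q ^ 3) {u : F} (hu : u ^ (q ^ 2 + q + 1) = 1) :
    ∃ x : F, x ≠ 0 ∧ x ^ q ^ 2 = u * x := by
  have hu0 : u ≠ 0 := by rintro rfl; simp at hu
  have hcard : Nat.card Fˣ / (Nat.card Fˣ).gcd (q ^ 2 - 1) = q ^ 2 + q + 1 := by
    rw [Nat.card_units, Nat.card_eq_fintype_card, hF, Nat.pow_sub_one_gcd_pow_sub_one,
      show Nat.gcd 3 2 = 1 from rfl, pow_one]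
    refine Nat.div_eq_of_eq_mul_left (by simpa using hq) ?_
    zify [Nat.one_le_pow 3 q (by omega), hq.le]
    ring
  have hmem : Units.mk0 u hu0 ∈ (powMonoidHom (q ^ 2 - 1) : Fˣ →* Fˣ).range := by
    rw [IsCyclic.range_powMonoidHom_eq_ker, hcard, MonoidHom.mem_ker, powMonoidHom_apply]
    exact Units.ext (by simpa using hu)
  obtain ⟨v, hv⟩ := hmem
  rw [powMonoidHom_apply] at hv
  refine ⟨v, v.ne_zero, ?_⟩
  rw [← Nat.sub_add_cancel (Nat.one_le_pow 2 q (by omega)), pow_succ, ← Units.val_pow_eq_pow_val,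
    hv, Units.val_mk0]

theorem pow_sq_eq_mul_iff_exists_smul_eq {K F : Type*} [Field K] [Fintype K] [Field F] [Fintype F]
    [Algebra K F] {q : ℕ} (hK : Fintype.card K = q) (hF : Fintype.card F = q ^ 3) {u x₀ x : F}
    (hx₀ : x₀ ≠ 0) (hx₀u : x₀ ^ q ^ 2 = u * x₀) :
    x ^ q ^ 2 = u * x ↔ ∃ c : K, c • x₀ = x := by
  set τ := FiniteField.frobeniusAlgHom K F ^ 2
  have hτ : ∀ x, τ x = x ^ q ^ 2 := fun x ↦ by
    rw [AlgHom.coe_pow, FiniteField.coe_frobeniusAlgHom, pow_iterate, hK]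
  have hτfix : ∀ z, τ z = z → z ∈ Set.range (algebraMap K F) := fun z hz ↦
    FiniteField.mem_range_algebraMap_iff_pow_card_eq_self.2 <| hK ▸
      pow_eq_self_of_pow_sq_eq_self (hF ▸ FiniteField.pow_card z) (hτ z ▸ hz)
  rw [← hτ, τ.apply_eq_mul_iff_exists_smul_eq hτfix hx₀ (hτ x₀ ▸ hx₀u)]

theorem coe_span_singleton_eq_inter_graphs {K F : Type*} [CommSemiring K] [CommSemiring F]
    [Algebra K F] {n : ℕ} {a k x₀ : F} (hsol : ∀ x, a * x ^ n = k * x ↔ ∃ c : K, c • x₀ = x) :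
    ((K ∙ (x₀, k * x₀) : Submodule K (F × F)) : Set (F × F)) =
      {p : F × F | ∃ x : F, p = (x, a * x ^ n)} ∩ {p : F × F | ∃ x : F, p = (x, k * x)} := by
  ext ⟨x, y⟩
  simp only [SetLike.mem_coe, Submodule.mem_span_singleton, Set.mem_inter_iff,
    Set.mem_ofPred_eq, Prod.ext_iff, Prod.smul_mk, exists_eq_left']
  constructor
  · rintro ⟨c, rfl, rfl⟩
    rw [(hsol _).2 ⟨c, rfl⟩, mul_smul_comm, and_self]
  · rintro ⟨hy, rfl⟩
    obtain ⟨c, rfl⟩ := (hsol _).1 hy.symm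
    exact ⟨c, rfl, (mul_smul_comm _ _ _).symm⟩

theorem inter_graphs_mul_pow_eq_zero {F : Type*} [CommRing F] [IsDomain F] {n : ℕ} (hn : n ≠ 0)
    {a a' : F} (hne : a ≠ a') :
    {p : F × F | ∃ x : F, p = (x, a * x ^ n)} ∩ {p : F × F | ∃ x : F, p = (x, a' * x ^ n)} =
      {0} := by
  ext ⟨x, y⟩
  simp only [Set.mem_inter_iff, Set.mem_ofPred_eq, Set.mem_singleton_iff, Prod.ext_iff,
    exists_eq_left', Prod.fst_zero, Prod.snd_zero]
  constructor
  · rintro ⟨rfl, h⟩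
    have hx : x ^ n = 0 := by
      by_contra hx
      exact hne (mul_right_cancel₀ hx h)
    exact ⟨(pow_eq_zero_iff hn).1 hx, by rw [hx, mul_zero]⟩
  · rintro ⟨rfl, rfl⟩
    simp [zero_pow hn]

theorem stmt_16_general (q : ℕ) (K F : Type*) [Field K] [Field F]
    [Algebra K F] [Fintype K] [Fintype F]
    (hK : Fintype.card K = q) (hF : Fintype.card F = q ^ 3) :
    (∀ k a : F, k ^ (q ^ 2 + q + 1) = 1 → a ^ (q ^ 2 + q + 1) = 1 →
      ∃ W : Submodule K (F × F),
        (W : Set (F × F)) =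
          {p : F × F | ∃ x : F, p = (x, a * x ^ q ^ 2)} ∩ {p : F × F | ∃ x : F, p = (x, k * x)} ∧
        Module.finrank K W = 1) ∧
    (∀ a a' : F, a ^ (q ^ 2 + q + 1) = 1 → a' ^ (q ^ 2 + q + 1) = 1 → a ≠ a' →
      {p : F × F | ∃ x : F, p = (x, a * x ^ q ^ 2)} ∩
        {p : F × F | ∃ x : F, p = (x, a' * x ^ q ^ 2)} = {0}) := by
  have hq : 1 < q := hK ▸ Fintype.one_lt_card
  refine ⟨fun k a hk ha ↦ ?_, fun a a' _ _ ↦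
    inter_graphs_mul_pow_eq_zero (pow_ne_zero 2 (by omega))⟩
  have ha0 : a ≠ 0 := by rintro rfl; simp at ha
  obtain ⟨x₀, hx₀, hx₀u⟩ :=
    exists_ne_zero_pow_sq_eq_mul hq hF (u := k / a) (by rw [div_pow, hk, ha, div_one])
  have hsol : ∀ x, a * x ^ q ^ 2 = k * x ↔ ∃ c : K, c • x₀ = x := fun x ↦ by
    rw [← pow_sq_eq_mul_iff_exists_smul_eq hK hF hx₀ hx₀u, div_mul_eq_mul_div, eq_div_iff ha0,
      mul_comm]
  exact ⟨K ∙ (x₀, k * x₀), coe_span_singleton_eq_inter_graphs hsol,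
    finrank_span_singleton (by simp [hx₀])⟩

theorem stmt_16 (q : ℕ) (hq : IsPrimePow q) (K F : Type*) [Field K] [Field F]
    [Algebra K F] [Fintype K] [Fintype F]
    (hK : Fintype.card K = q) (hF : Fintype.card F = q ^ 3) :
    (∀ k a : F, k ^ (q ^ 2 + q + 1) = 1 → a ^ (q ^ 2 + q + 1) = 1 →
      ∃ W : Submodule K (F × F),
        (W : Set (F × F)) =
          {p : F × F | ∃ x : F, p = (x, a * x ^ q ^ 2)} ∩ {p : F × F | ∃ x : F, p = (x, k * x)} ∧
        Module.finrank K W = 1) ∧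
    (∀ a a' : F, a ^ (q ^ 2 + q + 1) = 1 → a' ^ (q ^ 2 + q + 1) = 1 → a ≠ a' →
      {p : F × F | ∃ x : F, p = (x, a * x ^ q ^ 2)} ∩
        {p : F × F | ∃ x : F, p = (x, a' * x ^ q ^ 2)} = {0}) :=
  stmt_16_general q K F hK hF
end

section
/- Let N(x) = x^{q^2+q+1} be the norm from F_{q^3} to F_q. For a, b ∈ F_{q^3} with N(a) = N(b) = 1, the F_q-subspaces C_a = {(x, a·x^{q^2}) : x ∈ F_{q^3}} and T_b = {(x, b·x^q) : x ∈ F_{q^3}} of F_{q^3} × F_{q^3} intersect in an F_q-subspace of dimension exactly 1. -/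
/-!
If `N(b / a) = 1` then `b / a` is a `(q - 1)`-th power `z ^ (q - 1)` in the cyclic group `F_{q³}ˣ`
of order `(q - 1)(q² + q + 1)`, and `x₀ = z ^ q²` is a nonzero solution of
`a x ^ q² = b x ^ q`. The ratio `t` of two nonzero solutions satisfies `t ^ q² = t ^ q`; since
`x ↦ x ^ q` is injective on `F_{q³}`, `t ^ q = t`, i.e. `t ∈ F_q`. So `C_a ∩ T_b` is the
`F_q`-line through `(x₀, a x₀ ^ q²)`.
-/

open Polynomial

theorem IsCyclic.exists_pow_eq_of_pow_eq_one {G : Type*} [CommGroup G] [IsCyclic G] [Finite G]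
    {m k : ℕ} (hG : Nat.card G = m * k) {y : G} (hy : y ^ k = 1) : ∃ z, z ^ m = y := by
  have hm : 0 < m := Nat.pos_of_mul_pos_right (hG ▸ Nat.card_pos)
  have hle : (powMonoidHom m : G →* G).range ≤ (powMonoidHom k).ker := by
    rintro _ ⟨z, rfl⟩
    simp [← pow_mul, ← hG, pow_card_eq_one']
  have heq := Subgroup.eq_of_le_of_card_ge hle (by
    rw [IsCyclic.card_powMonoidHom_range, IsCyclic.card_powMonoidHom_ker, hG,
      Nat.gcd_mul_left_left, Nat.gcd_mul_right_left, Nat.mul_div_cancel_left _ hm])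
  obtain ⟨z, hz⟩ := heq.symm ▸ (MonoidHom.mem_ker.mpr hy : y ∈ (powMonoidHom k).ker)
  exact ⟨z, hz⟩

namespace FiniteField

theorem pow_card_eq_self_iff {K F : Type*} [Field K] [Fintype K] [Field F] [Algebra K F]
    {x : F} : x ^ Fintype.card K = x ↔ ∃ c : K, algebraMap K F c = x := by
  have hq := Fintype.one_lt_card (α := K)
  have hsplit : (X ^ Fintype.card K - X : K[X]).Splits := by
    rw [splits_iff_card_roots, roots_X_pow_card_sub_X, X_pow_card_sub_X_natDegree_eq K hq]
    rfl
  have hroots : ((X ^ Fintype.card K - X : K[X]).map (algebraMap K F)).roots =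
      Finset.univ.val.map (algebraMap K F) := by
    rw [hsplit.roots_map, roots_X_pow_card_sub_X]
  have := congrArg (x ∈ ·) hroots
  simp only [Polynomial.map_sub, Polynomial.map_pow, map_X, eq_iff_iff] at this
  simpa [sub_eq_zero, X_pow_card_sub_X_ne_zero F hq] using this

theorem pow_injective_of_card_eq_pow {F : Type*} [Field F] [Fintype F] {q n : ℕ}
    (hF : Fintype.card F = q ^ n) (hn : n ≠ 0) : Function.Injective (fun x : F => x ^ q) := by
  refine Function.LeftInverse.injective (g := fun x : F => x ^ q ^ (n - 1)) fun x => ?_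
  change (x ^ q) ^ q ^ (n - 1) = x
  rw [← pow_mul, ← pow_succ', Nat.sub_add_cancel (Nat.one_le_iff_ne_zero.mpr hn), ← hF,
    pow_card]

theorem exists_pow_sq_eq_mul_pow {F : Type*} [Field F] [Fintype F] {q : ℕ}
    (hF : Fintype.card F = q ^ 3) {c : F} (hc : c ^ (q ^ 2 + q + 1) = 1) :
    ∃ x : F, x ≠ 0 ∧ x ^ q ^ 2 = c * x ^ q := by
  classical
  have hq : 1 ≤ q := Nat.one_le_iff_ne_zero.mpr fun h => by simp [h] at hF
  have hc0 : c ≠ 0 := by rintro rfl; simp at hc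
  have hcard : Nat.card Fˣ = (q - 1) * (q ^ 2 + q + 1) := by
    rw [Nat.card_eq_fintype_card, Fintype.card_units, hF]
    zify [hq, Nat.one_le_pow 3 q hq]
    ring
  obtain ⟨z, hz⟩ := IsCyclic.exists_pow_eq_of_pow_eq_one hcard
    (y := Units.mk0 c hc0) (Units.ext (by simpa using hc))
  have hz' : (z : F) ^ (q - 1) = c := by simpa using congrArg Units.val hz
  -- `x = z ^ q²` is a `q`-th root of `z`, so `x ^ q² / x ^ q = z ^ q / z`.
  have hxq : ((z : F) ^ q ^ 2) ^ q = z := by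
    rw [← pow_mul, ← pow_succ, ← hF, pow_card]
  have hsq (y : F) : y ^ q ^ 2 = (y ^ q) ^ q := by rw [sq, pow_mul]
  refine ⟨(z : F) ^ q ^ 2, pow_ne_zero _ z.ne_zero, ?_⟩
  rw [hsq ((z : F) ^ q ^ 2), hxq, ← hz', ← pow_succ, Nat.sub_add_cancel hq]

theorem mul_pow_sq_eq_mul_pow_iff {K F : Type*} [Field K] [Fintype K] [Field F] [Fintype F]
    [Algebra K F] {q : ℕ} (hK : Fintype.card K = q) (hF : Fintype.card F = q ^ 3)
    {a b x₀ : F} (ha : a ≠ 0) (hx₀ : x₀ ≠ 0) (h₀ : a * x₀ ^ q ^ 2 = b * x₀ ^ q)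
    {x : F} :
    a * x ^ q ^ 2 = b * x ^ q ↔ ∃ c : K, algebraMap K F c * x₀ = x := by
  constructor
  · intro h
    set t := x * x₀⁻¹
    have hcross : x ^ q ^ 2 * x₀ ^ q = x ^ q * x₀ ^ q ^ 2 :=
      mul_left_cancel₀ ha (by linear_combination x₀ ^ q * h - x ^ q * h₀)
    have ht : (t ^ q) ^ q = t ^ q := by
      rw [← pow_mul, ← sq, mul_pow, mul_pow, inv_pow, inv_pow]
      field_simp
      linear_combination hcross
    obtain ⟨c, hc⟩ := pow_card_eq_self_iff.mp
      (hK ▸ pow_injective_of_card_eq_pow hF three_ne_zero ht)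
    exact ⟨c, by rw [hc, inv_mul_cancel_right₀ hx₀]⟩
  · rintro ⟨c, rfl⟩
    have hc : algebraMap K F c ^ q = algebraMap K F c := by
      rw [← map_pow, ← hK, pow_card]
    have hc₂ : algebraMap K F c ^ q ^ 2 = algebraMap K F c := by
      rw [← map_pow, ← hK, pow_card_pow]
    rw [mul_pow, mul_pow, hc, hc₂]
    linear_combination algebraMap K F c * h₀

end FiniteField

theorem stmt_17_general (q : ℕ) (K F : Type*) [Field K] [Field F]
    [Algebra K F] [Fintype K] [Fintype F]
    (hK : Fintype.card K = q) (hF : Fintype.card F = q ^ 3)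
    (a b : F) (ha : a ^ (q ^ 2 + q + 1) = 1) (hb : b ^ (q ^ 2 + q + 1) = 1) :
    ∃ W : Submodule K (F × F),
      (W : Set (F × F)) =
        {p : F × F | ∃ x : F, p = (x, a * x ^ q ^ 2)} ∩
          {p : F × F | ∃ x : F, p = (x, b * x ^ q)} ∧
      Module.finrank K W = 1 := by
  have ha₀ : a ≠ 0 := by rintro rfl; simp at ha
  obtain ⟨x₀, hx₀, h₀⟩ := FiniteField.exists_pow_sq_eq_mul_pow hF (c := b / a)
    (by rw [div_pow, ha, hb, div_one])
  replace h₀ : a * x₀ ^ q ^ 2 = b * x₀ ^ q := by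
    rw [h₀]; field_simp
  refine ⟨K ∙ (x₀, a * x₀ ^ q ^ 2), ?_, finrank_span_singleton (by simp [hx₀])⟩
  have hK' (c : K) : algebraMap K F c ^ q ^ 2 = algebraMap K F c := by
    rw [← map_pow, ← hK, FiniteField.pow_card_pow]
  ext ⟨x, y⟩
  simp only [SetLike.mem_coe, Submodule.mem_span_singleton, Set.mem_inter_iff, Set.mem_ofPred_eq,
    Prod.smul_mk, Prod.mk.injEq, exists_eq_left']
  simp only [Algebra.smul_def]
  constructor
  · rintro ⟨c, rfl, rfl⟩
    have hy : algebraMap K F c * (a * x₀ ^ q ^ 2) = a * (algebraMap K F c * x₀) ^ q ^ 2 := by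
      rw [mul_pow, hK']; ring
    exact ⟨hy,
      hy.trans ((FiniteField.mul_pow_sq_eq_mul_pow_iff hK hF ha₀ hx₀ h₀).mpr ⟨c, rfl⟩)⟩
  · rintro ⟨rfl, h⟩
    obtain ⟨c, rfl⟩ := (FiniteField.mul_pow_sq_eq_mul_pow_iff hK hF ha₀ hx₀ h₀).mp h
    exact ⟨c, rfl, by rw [mul_pow, hK']; ring⟩

theorem stmt_17 (q : ℕ) (hq : IsPrimePow q) (K F : Type*) [Field K] [Field F]
    [Algebra K F] [Fintype K] [Fintype F]
    (hK : Fintype.card K = q) (hF : Fintype.card F = q ^ 3)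
    (a b : F) (ha : a ^ (q ^ 2 + q + 1) = 1) (hb : b ^ (q ^ 2 + q + 1) = 1) :
    ∃ W : Submodule K (F × F),
      (W : Set (F × F)) =
        {p : F × F | ∃ x : F, p = (x, a * x ^ q ^ 2)} ∩
          {p : F × F | ∃ x : F, p = (x, b * x ^ q)} ∧
      Module.finrank K W = 1 :=
  stmt_17_general q K F hK hF a b ha hb
end

section
/- Let S = {k ∈ F_{q^3} : k^{q^2+q+1} = 1}, viewed as a subset of the projective line PG(1,q^3) via k ↦ (k:1). If φ is a projectivity of PG(1,q^3) (an element of PGL(2,q^3)) with φ(S) ≠ S, then |S ∩ φ(S)| ≤ 2q+2. -/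
theorem stmt_18 (q : ℕ) (hq : IsPrimePow q) (F : Type*) [Field F] [Fintype F]
    (hF : Fintype.card F = q ^ 3)
    (g : (Fin 2 → F) →ₗ[F] (Fin 2 → F)) (hg : Function.Injective g)
    (S : Set (Projectivization F (Fin 2 → F)))
    (hS : S = {p | ∃ k : F, k ^ (q ^ 2 + q + 1) = 1 ∧
      p = Projectivization.mk F ![k, 1] (by
        intro h
        simpa using congrFun h 1)})
    (hne : Projectivization.map g hg '' S ≠ S) :
    (S ∩ Projectivization.map g hg '' S).ncard ≤ 2 * q + 2 := by
  classical
  -- Frobenius facts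
  obtain ⟨p, m, hp, hm, hpm⟩ := hq
  have hp' : p.Prime := hp.nat_prime
  haveI := Fact.mk hp'
  have hcast : ((Fintype.card F : F)) = 0 := FiniteField.cast_card_eq_zero F
  have hpF : (p : F) = 0 := by
    rw [hF, ← hpm, ← pow_mul] at hcast
    push_cast at hcast
    exact pow_eq_zero_iff (by positivity : m * 3 ≠ 0) |>.mp hcast
  have hrc : ringChar F = p := by
    have h1 : ringChar F ∣ p := (ringChar.spec F p).mp hpF
    rcases (Nat.Prime.eq_one_or_self_of_dvd hp' _ h1) with h | h
    · exact absurd h (CharP.ringChar_ne_one)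
    · exact h
  haveI : CharP F p := hrc ▸ ringChar.charP F
  have frobq : ∀ x y : F, (x - y) ^ q = x ^ q - y ^ q := by
    intro x y; rw [← hpm]; exact sub_pow_char_pow_of_commute _ _ (Commute.all x y)
  have frobq2 : ∀ x y : F, (x - y) ^ q ^ 2 = x ^ q ^ 2 - y ^ q ^ 2 := by
    intro x y; rw [← hpm, ← pow_mul]
    exact sub_pow_char_pow_of_commute _ _ (Commute.all x y)
  set n := q ^ 2 + q + 1 with hn
  have hn0 : n ≠ 0 := by positivity
  -- matrix entries of g
  set a := g ![1, 0] 0 with ha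
  set c := g ![1, 0] 1 with hc
  set b := g ![0, 1] 0 with hb
  set d := g ![0, 1] 1 with hd
  have hnz : ∀ k : F, ![k, (1 : F)] ≠ 0 := by
    intro k h; simpa using congrFun h 1
  have hgv : ∀ x y : F, g ![x, y] = ![a * x + b * y, c * x + d * y] := by
    intro x y
    have hxy : (![x, y] : Fin 2 → F) = x • ![1, 0] + y • ![0, 1] := by
      funext i; fin_cases i <;> simp
    rw [hxy, map_add, map_smul, map_smul]
    funext i; fin_cases i <;>
      simp [Pi.add_apply, Pi.smul_apply, smul_eq_mul, ha, hb, hc, hd, mul_comm]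
  have hdet : a * d - b * c ≠ 0 := by
    intro h
    have h1 : g ![d, -c] = 0 := by
      rw [hgv]
      funext i; fin_cases i <;>
        simp only [Matrix.cons_val_zero, Matrix.cons_val_one, Matrix.head_cons, Pi.zero_apply,
          Fin.isValue, Fin.zero_eta, Fin.mk_one] <;>
        first | ring1 | linear_combination h | linear_combination -h
    have h2 : g ![-b, a] = 0 := by
      rw [hgv]
      funext i; fin_cases i <;>
        simp only [Matrix.cons_val_zero, Matrix.cons_val_one, Matrix.head_cons, Pi.zero_apply,
          Fin.isValue, Fin.zero_eta, Fin.mk_one] <;>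
        first | ring1 | linear_combination h | linear_combination -h
    have e1 : (![d, -c] : Fin 2 → F) = 0 := hg (by rw [h1, map_zero])
    have e2 : (![-b, a] : Fin 2 → F) = 0 := hg (by rw [h2, map_zero])
    have hd0 : d = 0 := by simpa using congrFun e1 0
    have hc0 : c = 0 := by simpa using congrFun e1 1
    have hb0 : b = 0 := by simpa using congrFun e2 0
    have ha0 : a = 0 := by simpa using congrFun e2 1
    have h3 : g ![1, 0] = 0 := by
      rw [hgv]; funext i; fin_cases i <;> simp [ha0, hb0, hc0, hd0]
    have : (![1, 0] : Fin 2 → F) = 0 := hg (by rw [h3, map_zero])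
    simpa using congrFun this 0
  -- determinant lemmas
  have hcd : ∀ k k' : F, k' * (a - k * c) = k * d - b → c * k' + d ≠ 0 := by
    intro k k' hkey h
    apply hdet
    linear_combination (a - k * c) * h - c * hkey
  have hmap : ∀ k k' : F, k' * (a - k * c) = k * d - b →
      Projectivization.map g hg (Projectivization.mk F ![k', 1] (hnz k')) =
        Projectivization.mk F ![k, 1] (hnz k) := by
    intro k k' hkey
    rw [Projectivization.map_mk]
    refine (Projectivization.mk_eq_mk_iff F _ _ _ _).mpr ⟨Units.mk0 (c * k' + d) (hcd k k' hkey), ?_⟩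
    rw [hgv]
    funext i; fin_cases i <;>
      simp only [Units.smul_def, Units.val_mk0, Pi.smul_apply, smul_eq_mul, Matrix.cons_val_zero,
        Matrix.cons_val_one, Matrix.head_cons, mul_one, Fin.isValue, Fin.zero_eta, Fin.mk_one] <;>
      first | ring1 | linear_combination hkey | linear_combination -hkey
  have hrev : ∀ (k k' : F) (h1 : ![k, (1:F)] ≠ 0) (h2 : ![k', (1:F)] ≠ 0),
      Projectivization.map g hg (Projectivization.mk F ![k', 1] h2) =
        Projectivization.mk F ![k, 1] h1 → k' * (a - k * c) = k * d - b := by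
    intro k k' h1 h2 h
    rw [Projectivization.map_mk, Projectivization.mk_eq_mk_iff] at h
    obtain ⟨u, hu⟩ := h
    rw [hgv] at hu
    have h0 := congrFun hu 0
    have h1' := congrFun hu 1
    simp only [Units.smul_def, Pi.smul_apply, smul_eq_mul, Matrix.cons_val_zero,
      Matrix.cons_val_one, Matrix.head_cons, mul_one, Fin.isValue] at h0 h1'
    linear_combination -h0 + k * h1'
  -- the algebraic incidence set
  set T : Set F := {k | k ^ n = 1 ∧ ∃ k' : F, k' ^ n = 1 ∧ k' * (a - k * c) = k * d - b} with hT
  subst hS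
  have himg : ({p | ∃ k : F, k ^ n = 1 ∧ p = Projectivization.mk F ![k, 1] (by
        intro h
        simpa using congrFun h 1)} ∩ (Projectivization.map g hg '' {p | ∃ k : F, k ^ n = 1 ∧ p = Projectivization.mk F ![k, 1] (by
        intro h
        simpa using congrFun h 1)})) =
      (fun k : F => Projectivization.mk F ![k, 1] (hnz k)) '' T := by
    ext x
    constructor
    · rintro ⟨⟨k, hkn, rfl⟩, pp, ⟨k', hk'n, rfl⟩, hmapeq⟩
      exact ⟨k, ⟨hkn, k', hk'n, hrev k k' _ _ hmapeq⟩, rfl⟩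
    · rintro ⟨k, ⟨hkn, k', hk'n, hkey⟩, rfl⟩
      exact ⟨⟨k, hkn, rfl⟩, Projectivization.mk F ![k', 1] (hnz k'),
        ⟨k', hk'n, rfl⟩, hmap k k' hkey⟩
  -- the polynomial
  set f : Polynomial F :=
    (Polynomial.C d * Polynomial.X - Polynomial.C b) *
      (Polynomial.C (d ^ q) * Polynomial.X ^ q - Polynomial.C (b ^ q)) *
      (Polynomial.C (d ^ q ^ 2) - Polynomial.C (b ^ q ^ 2) * Polynomial.X ^ (q + 1)) -
    (Polynomial.C a - Polynomial.C c * Polynomial.X) *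
      (Polynomial.C (a ^ q) - Polynomial.C (c ^ q) * Polynomial.X ^ q) *
      (Polynomial.C (a ^ q ^ 2) * Polynomial.X ^ (q + 1) - Polynomial.C (c ^ q ^ 2)) with hf
  have heval : ∀ k : F, Polynomial.eval k f =
      (d * k - b) * (d ^ q * k ^ q - b ^ q) * (d ^ q ^ 2 - b ^ q ^ 2 * k ^ (q + 1)) -
      (a - c * k) * (a ^ q - c ^ q * k ^ q) * (a ^ q ^ 2 * k ^ (q + 1) - c ^ q ^ 2) := by
    intro k; rw [hf]; simp
  have hsplit : ∀ z : F, z ^ n = z ^ q ^ 2 * z ^ q * z := by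
    intro z; rw [hn, pow_add, pow_add, pow_one]
  have hiff : ∀ k : F, k ^ n = 1 →
      (Polynomial.eval k f = 0 ↔ (k * d - b) ^ n = (a - k * c) ^ n) := by
    intro k hkn
    have hk0 : k ≠ 0 := by
      rintro rfl; rw [zero_pow hn0] at hkn; exact one_ne_zero hkn.symm
    have hq1 : k ^ (q + 1) ≠ 0 := pow_ne_zero _ hk0
    have hkq2 : k ^ q ^ 2 * k ^ (q + 1) = 1 := by
      rw [← pow_add, show q ^ 2 + (q + 1) = n by rw [hn]; ring]; exact hkn
    have e1 : k ^ (q + 1) * (k * d - b) ^ n =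
        (d * k - b) * (d ^ q * k ^ q - b ^ q) * (d ^ q ^ 2 - b ^ q ^ 2 * k ^ (q + 1)) := by
      rw [hsplit, frobq2, frobq, mul_pow, mul_pow]
      linear_combination (d ^ q ^ 2 * ((k ^ q * d ^ q - b ^ q) * (k * d - b))) * hkq2
    have e2 : k ^ (q + 1) * (a - k * c) ^ n =
        (a - c * k) * (a ^ q - c ^ q * k ^ q) * (a ^ q ^ 2 * k ^ (q + 1) - c ^ q ^ 2) := by
      rw [hsplit, frobq2, frobq, mul_pow]
      linear_combination (-(c ^ q ^ 2) * ((a ^ q - c ^ q * k ^ q) * (a - k * c))) * hkq2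
    rw [heval k, ← e1, ← e2, sub_eq_zero]
    exact mul_right_inj' hq1
  -- degree bound
  have haux1 : ∀ (u v : F) (t : ℕ),
      (Polynomial.C u * Polynomial.X ^ t - Polynomial.C v).natDegree ≤ t := by
    intro u v t
    refine le_trans (Polynomial.natDegree_sub_le _ _) (max_le ?_ ?_)
    · exact le_trans (Polynomial.natDegree_C_mul_le _ _) (le_of_eq (Polynomial.natDegree_X_pow _))
    · simp
  have haux2 : ∀ (u v : F) (t : ℕ),
      (Polynomial.C v - Polynomial.C u * Polynomial.X ^ t).natDegree ≤ t := by
    intro u v t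
    refine le_trans (Polynomial.natDegree_sub_le _ _) (max_le ?_ ?_)
    · simp
    · exact le_trans (Polynomial.natDegree_C_mul_le _ _) (le_of_eq (Polynomial.natDegree_X_pow _))
  have haux3 : (Polynomial.C d * Polynomial.X - Polynomial.C b : Polynomial F).natDegree ≤ 1 := by
    have := haux1 d b 1; rwa [pow_one] at this
  have haux4 : (Polynomial.C a - Polynomial.C c * Polynomial.X : Polynomial F).natDegree ≤ 1 := by
    have := haux2 c a 1; rwa [pow_one] at this
  have hdeg : f.natDegree ≤ 2 * q + 2 := by
    rw [hf]
    refine le_trans (Polynomial.natDegree_sub_le _ _) (max_le ?_ ?_)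
    · refine le_trans (Polynomial.natDegree_mul_le) ?_
      have := add_le_add (le_trans (Polynomial.natDegree_mul_le)
        (add_le_add haux3 (haux1 (d ^ q) (b ^ q) q))) (haux2 (b ^ q ^ 2) (d ^ q ^ 2) (q + 1))
      omega
    · refine le_trans (Polynomial.natDegree_mul_le) ?_
      have := add_le_add (le_trans (Polynomial.natDegree_mul_le)
        (add_le_add haux4 (haux2 (c ^ q) (a ^ q) q))) (haux1 (a ^ q ^ 2) (c ^ q ^ 2) (q + 1))
      omega
  -- finiteness
  haveI : Finite (Projectivization F (Fin 2 → F)) := Quotient.finite _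
  -- the polynomial is nonzero
  have hf0 : f ≠ 0 := by
    intro h0
    apply hne
    have hsub : {p | ∃ k : F, k ^ n = 1 ∧ p = Projectivization.mk F ![k, 1] (by
          intro h
          simpa using congrFun h 1)} ⊆ Projectivization.map g hg '' {p | ∃ k : F, k ^ n = 1 ∧ p = Projectivization.mk F ![k, 1] (by
        intro h
        simpa using congrFun h 1)} := by
      rintro x ⟨k, hkn, rfl⟩
      have hfk : Polynomial.eval k f = 0 := by rw [h0]; simp
      have hE : (k * d - b) ^ n = (a - k * c) ^ n := (hiff k hkn).mp hfk
      have hAC : a - k * c ≠ 0 := by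
        intro hz
        have h1 : (k * d - b) ^ n = 0 := by rw [hE, hz, zero_pow hn0]
        have h2 : k * d - b = 0 := (pow_eq_zero_iff hn0).mp h1
        exact hdet (by linear_combination d * hz + c * h2)
      have hkey : (k * d - b) / (a - k * c) * (a - k * c) = k * d - b := div_mul_cancel₀ _ hAC
      have hk''n : ((k * d - b) / (a - k * c)) ^ n = 1 := by
        rw [div_pow, hE, div_self (pow_ne_zero _ hAC)]
      exact ⟨Projectivization.mk F ![(k * d - b) / (a - k * c), 1] (hnz _),
        ⟨(k * d - b) / (a - k * c), hk''n, rfl⟩, hmap k _ hkey⟩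
    exact (Set.eq_of_subset_of_ncard_le hsub
      (le_of_eq (Set.ncard_image_of_injective _ (Projectivization.map_injective g hg)))
      (Set.toFinite _)).symm
  -- count
  rw [himg]
  have h1 : ((fun k : F => Projectivization.mk F ![k, 1] (hnz k)) '' T).ncard ≤ T.ncard :=
    Set.ncard_image_le (Set.toFinite T)
  have hTsub : T ⊆ (f.roots.toFinset : Set F) := by
    rintro k ⟨hkn, k', hk'n, hkey⟩
    have hE : (k * d - b) ^ n = (a - k * c) ^ n := by
      rw [← hkey, mul_pow, hk'n, one_mul]
    have hroot : Polynomial.eval k f = 0 := (hiff k hkn).mpr hE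
    simp only [Finset.coe_sort_coe, Multiset.mem_toFinset, Finset.mem_coe]
    rw [Polynomial.mem_roots hf0]
    exact hroot
  have h2 : T.ncard ≤ f.roots.toFinset.card := by
    rw [← Set.ncard_coe_finset]
    exact Set.ncard_le_ncard hTsub (Set.toFinite _)
  have h3 : f.roots.toFinset.card ≤ f.natDegree :=
    le_trans (Multiset.toFinset_card_le _) (Polynomial.card_roots' f)
  omega
end
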